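/- Let K be a field, Q ∈ K[X, Y_1,...,Y_s] a nonzero solution of Problem MultivariateInterpolation with pairwise distinct x_1,...,x_n, multiplicities m_1,...,m_n, weights k_j ≥ n for all j, list-size ℓ, and weighted-degree bound b. Then b > Σ_{1≤i≤n} m_i. -/

import Mathlib

/-- The shifted polynomial `Q(X + x, Y_1 + y_1, ..., Y_s + y_s)`. -/
noncomputable def shiftPoint {K : Type*} [Field K] {s : ℕ} (x : K) (y : Fin s → K)
    (Q : MvPolynomial (Fin s) (Polynomial K)) : MvPolynomial (Fin s) (Polynomial K) :=
  MvPolynomial.eval₂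
    ((MvPolynomial.C).comp (Polynomial.aeval (Polynomial.X + Polynomial.C x)).toRingHom)
    (fun k => MvPolynomial.X k + MvPolynomial.C (Polynomial.C (y k))) Q

/-- `(x, y)` is a zero of `Q` of multiplicity at least `m`: the shifted
polynomial `Q(X+x, Y+y)` has no monomial of total degree less than `m`. -/
def VanishesAt {K : Type*} [Field K] {s : ℕ} (Q : MvPolynomial (Fin s) (Polynomial K))
    (x : K) (y : Fin s → K) (m : ℕ) : Prop :=
  ∀ (j : Fin s →₀ ℕ) (h : ℕ), h + (j.sum fun _ e => e) < m →
    Polynomial.coeff (MvPolynomial.coeff j (shiftPoint x y Q)) h = 0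

/-- `Q` is a solution of Problem MultivariateInterpolation with list-size `ℓ`,
multiplicities `mm`, weighted-degree bound `b`, weights `k`, and points
`(x i, y i)`: `Q` is nonzero, `deg_Y Q ≤ ℓ`, `wdeg_k Q < b`, and `Q` vanishes
at each point with multiplicity at least `mm i`. -/
def IsSolution {K : Type*} [Field K] {s n : ℕ} (ℓ : ℕ) (mm : Fin n → ℕ) (b : ℤ)
    (k : Fin s → ℤ) (x : Fin n → K) (y : Fin n → Fin s → K)
    (Q : MvPolynomial (Fin s) (Polynomial K)) : Prop :=
  Q ≠ 0 ∧
  (∀ j : Fin s →₀ ℕ, MvPolynomial.coeff j Q ≠ 0 → (j.sum fun _ e => e) ≤ ℓ) ∧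
  (∀ j : Fin s →₀ ℕ, MvPolynomial.coeff j Q ≠ 0 →
      ((MvPolynomial.coeff j Q).natDegree : ℤ) + ∑ r, (j r : ℤ) * k r < b) ∧
  (∀ i : Fin n, VanishesAt Q (x i) (y i) (mm i))

/-! Let `Y^j` be a monomial of top total degree `d` in `Q`. Shifting `Y ↦ Y + y_i` does not
change the coefficients of top-degree monomials, so the coefficient of `Y^j` in
`Q(X + x_i, Y + y_i)` is `Q_j(X + x_i)`, and vanishing to order `m_i` forces
`(X - x_i)^(m_i - d) ∣ Q_j`. As the `x_i` are distinct,
`deg Q_j ≥ Σ_i (m_i - d) ≥ Σ_i m_i - n d`, whereas `b > deg Q_j + Σ_r j_r k_r ≥ deg Q_j + n d`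
because every `k_r ≥ n`. -/

namespace MvPolynomial

variable {R σ : Type*} [CommSemiring R]

theorem coeff_aeval_X_add_C_monomial (c : σ → R) (s : σ →₀ ℕ) (a : R) {j : σ →₀ ℕ}
    (h : s.degree ≤ j.degree) :
    coeff j (aeval (fun i => X i + C (c i)) (monomial s a)) = coeff j (monomial s a) := by
  classical
  set φ := aeval (R := R) (fun i => X i + C (c i))
  suffices step : ∀ (s : σ →₀ ℕ) (n : σ),
      (∀ {j : σ →₀ ℕ}, s.degree ≤ j.degree →
        coeff j (φ (monomial s a)) = coeff j (monomial s a)) →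
      ∀ {j : σ →₀ ℕ}, (s + Finsupp.single n 1).degree ≤ j.degree →
        coeff j (φ (monomial (s + Finsupp.single n 1) a)) =
          coeff j (monomial (s + Finsupp.single n 1) a) by
    revert j
    induction s using Finsupp.induction with
    | zero => simp [φ, ← C_apply]
    | single_add n e t hn he ih =>
      clear hn he
      induction e with
      | zero => intro j; simpa using @ih j
      | succ e ihe =>
        rw [Finsupp.single_add, add_right_comm]
        exact step _ n ihe
  intro s n hs j hj
  have hlt : s.degree < j.degree := by simpa [Finsupp.degree_single] using hj
  -- the `C (c n)` summand of `X n + C (c n)` only reaches degrees `≤ s.degree`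
  have hlow : coeff j (φ (monomial s a)) = 0 := by
    rw [hs hlt.le, coeff_monomial, if_neg (by rintro rfl; exact hlt.false)]
  rw [monomial_add_single, pow_one, map_mul, aeval_X, mul_add, coeff_add, mul_comm _ (C _),
    coeff_C_mul, hlow, mul_zero, add_zero, coeff_mul_X', coeff_mul_X']
  split_ifs with hn
  · apply hs
    have hsplit : j - Finsupp.single n 1 + Finsupp.single n 1 = j :=
      tsub_add_cancel_of_le (Finsupp.single_le_iff.mpr (Finsupp.mem_support_iff.mp hn |>.bot_lt))
    have := congrArg Finsupp.degree hsplit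
    rw [map_add, Finsupp.degree_single] at this
    omega
  · rfl

theorem coeff_aeval_X_add_C_of_totalDegree_le (c : σ → R) (p : MvPolynomial σ R)
    {j : σ →₀ ℕ} (h : p.totalDegree ≤ j.degree) :
    coeff j (aeval (fun i => X i + C (c i)) p) = coeff j p := by
  conv_lhs => rw [p.as_sum, map_sum, coeff_sum]
  rw [Finset.sum_congr rfl fun s hs =>
      coeff_aeval_X_add_C_monomial c s _ ((le_totalDegree hs).trans h),
    ← coeff_sum, ← p.as_sum]

end MvPolynomial

section

open Polynomial

theorem Polynomial.sum_le_natDegree_of_X_sub_C_pow_dvd {K ι : Type*} [Field K] [Fintype ι]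
    {x : ι → K} (hx : Function.Injective x) {e : ι → ℕ} {p : K[X]} (hp : p ≠ 0)
    (h : ∀ i, (X - C (x i)) ^ e i ∣ p) : ∑ i, e i ≤ p.natDegree := by
  have hprod : ∏ i, (X - C (x i)) ^ e i ∣ p :=
    Fintype.prod_dvd_of_coprime (fun i i' hii' => (pairwise_coprime_X_sub_C hx hii').pow) h
  simpa [natDegree_prod _ _ fun i _ => pow_ne_zero _ (X_sub_C_ne_zero (x i))] using
    natDegree_le_of_dvd hprod hp

theorem coeff_shiftPoint_of_totalDegree_le {K : Type*} [Field K] {s : ℕ} (x : K) (y : Fin s → K)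
    (Q : MvPolynomial (Fin s) K[X]) {j : Fin s →₀ ℕ} (hj : Q.totalDegree ≤ j.degree) :
    (shiftPoint x y Q).coeff j = taylor x (Q.coeff j) := by
  have hshift : shiftPoint x y Q =
      MvPolynomial.aeval (fun r => MvPolynomial.X r + MvPolynomial.C (C (y r)))
        (MvPolynomial.map (aeval (X + C x)).toRingHom Q) := by
    rw [MvPolynomial.aeval_def, MvPolynomial.eval₂_map]
    rfl
  have hmap : (MvPolynomial.map (aeval (X + C x)).toRingHom Q).totalDegree ≤ j.degree :=
    (MvPolynomial.totalDegree_le_of_support_subset (MvPolynomial.support_map_subset _ _)).trans hj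
  rw [hshift, MvPolynomial.coeff_aeval_X_add_C_of_totalDegree_le _ _ hmap,
    MvPolynomial.coeff_map, taylor_apply, comp_eq_aeval]
  rfl

theorem VanishesAt.X_sub_C_pow_dvd_coeff {K : Type*} [Field K] {s : ℕ}
    {Q : MvPolynomial (Fin s) K[X]} {x : K} {y : Fin s → K} {m : ℕ} (hQ : VanishesAt Q x y m)
    {j : Fin s →₀ ℕ} (hj : Q.totalDegree ≤ j.degree) :
    (X - C x) ^ (m - j.degree) ∣ Q.coeff j := by
  rw [X_sub_C_pow_dvd_iff, ← taylor_apply, ← coeff_shiftPoint_of_totalDegree_le x y Q hj,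
    X_pow_dvd_iff]
  intro h hh
  exact hQ j h (show h + j.degree < m by omega)

end

theorem bound_gt_sum_of_multiplicities_general {K : Type*} [Field K] {s n : ℕ}
    (ℓ : ℕ) (mm : Fin n → ℕ)
    (b : ℤ) (k : Fin s → ℤ) (hk : ∀ j, (n : ℤ) ≤ k j)
    (x : Fin n → K) (hx : Function.Injective x) (y : Fin n → Fin s → K)
    (Q : MvPolynomial (Fin s) (Polynomial K))
    (hQ : IsSolution ℓ mm b k x y Q) :
    ∑ i, (mm i : ℤ) < b := by
  obtain ⟨hQ0, -, hwdeg, hvan⟩ := hQ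
  obtain ⟨j, hj, htop⟩ :=
    Q.support.exists_mem_eq_sup (MvPolynomial.support_nonempty.mpr hQ0) fun j => j.degree
  have hQj : Q.coeff j ≠ 0 := MvPolynomial.mem_support_iff.mp hj
  have hroots : ∑ i, (mm i - j.degree) ≤ (Q.coeff j).natDegree :=
    Polynomial.sum_le_natDegree_of_X_sub_C_pow_dvd hx hQj fun i =>
      (hvan i).X_sub_C_pow_dvd_coeff htop.le
  have hsum : ∑ i, mm i ≤ ∑ i, (mm i - j.degree) + n * j.degree :=
    calc ∑ i, mm i ≤ ∑ i, (mm i - j.degree + j.degree) :=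
          Finset.sum_le_sum fun i _ => le_tsub_add
      _ = ∑ i, (mm i - j.degree) + n * j.degree := by simp [Finset.sum_add_distrib]
  have hweights : (n : ℤ) * j.degree ≤ ∑ r, (j r : ℤ) * k r := by
    rw [Finsupp.degree_eq_sum, Nat.cast_sum, Finset.mul_sum]
    exact Finset.sum_le_sum fun r _ => by
      rw [mul_comm]; exact mul_le_mul_of_nonneg_left (hk r) (Nat.cast_nonneg _)
  have hbound : ∑ i, (mm i : ℤ) ≤ (Q.coeff j).natDegree + n * j.degree := by
    exact_mod_cast hsum.trans (Nat.add_le_add_right hroots _)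
  linarith [hwdeg j hQj]

/-- If `Q` is a nonzero solution of Problem MultivariateInterpolation with
pairwise distinct `x_i` and all weights `k_j ≥ n`, then `b > Σ_i m_i`. -/
theorem bound_gt_sum_of_multiplicities {K : Type*} [Field K] {s n : ℕ}
    (ℓ : ℕ) (hℓ : 0 < ℓ) (mm : Fin n → ℕ) (hmm : ∀ i, 0 < mm i)
    (b : ℤ) (k : Fin s → ℤ) (hk : ∀ j, (n : ℤ) ≤ k j)
    (x : Fin n → K) (hx : Function.Injective x) (y : Fin n → Fin s → K)
    (Q : MvPolynomial (Fin s) (Polynomial K))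
    (hQ : IsSolution ℓ mm b k x y Q) :
    ∑ i, (mm i : ℤ) < b :=
  bound_gt_sum_of_multiplicities_general ℓ mm b k hk x hx y Q hQ
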